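/- arXiv:1308.3831 — 2 statements merged into one kernel-verified Lean document; each statement's English description precedes it below -/
import Mathlib

section
/- Let 0 < p < 1, q = 1−p, and let r, Δ be positive integers, with n > 2r+1. Then P_p(X_0(n,r) = 1 and R ≥ Δ | σ_0 = 0) ≤ (1/Δ)·q^{−r}·(r·q^r + 1/(p·q)). -/
open Finset


/-- Number of active neighbors of vertex `i` in the ring `C_n(r)`.
For `n > 2r+1` the `2r` offsets `±1, …, ±r` give pairwise distinct neighbors. -/
def activeNbrs (n r : ℕ) (σ : ZMod n → Bool) (i : ZMod n) : ℕ :=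
  ∑ k ∈ Finset.Icc 1 r,
    ((if σ (i + (k : ZMod n)) then 1 else 0) + (if σ (i - (k : ZMod n)) then 1 else 0))

/-- One synchronous step of strict majority bootstrap percolation on `C_n(r)`:
a passive vertex (degree `2r`) becomes active iff at least `r+1 = ⌈(2r+1)/2⌉`
of its neighbors are active; active vertices stay active. -/
def ringStep (n r : ℕ) (σ : ZMod n → Bool) : ZMod n → Bool :=
  fun i => σ i || decide (r + 1 ≤ activeNbrs n r σ i)

/-- The fixed point of strict MBP on `C_n(r)`; `n` monotone steps suffice to stabilize. -/
def ringFix (n r : ℕ) (σ : ZMod n → Bool) : ZMod n → Bool :=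
  (ringStep n r)^[n] σ

/-- Probability of an event under i.i.d. Bernoulli(`p`) initial states. -/
noncomputable def pr {V : Type} [Fintype V] [DecidableEq V] (p : ℝ) (S : Set (V → Bool)) : ℝ :=
  ∑ σ : V → Bool, S.indicator (fun τ => ∏ v, (if τ v then p else 1 - p)) σ

/-- Expectation of a random variable under i.i.d. Bernoulli(`p`) initial states. -/
noncomputable def expec {V : Type} [Fintype V] [DecidableEq V]
    (p : ℝ) (f : (V → Bool) → ℝ) : ℝ :=
  ∑ σ : V → Bool, f σ * ∏ v, (if σ v then p else 1 - p)

/-- `E_p[X_0(n,r)]`: probability that vertex `0` is active at the fixed point. -/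
noncomputable def Ex (r : ℕ) (p : ℝ) (n : ℕ) : ℝ :=
  if h : n = 0 then 0 else
    haveI : NeZero n := ⟨h⟩
    pr p {σ : ZMod n → Bool | ringFix n r σ 0 = true}

/-- `p_R(n,r,p)`: probability that strictly more than half of the `n` vertices are
active at the fixed point of strict MBP on `C_n(r)`. -/
noncomputable def pR (r : ℕ) (p : ℝ) (n : ℕ) : ℝ :=
  if h : n = 0 then 0 else
    haveI : NeZero n := ⟨h⟩
    pr p {σ : ZMod n → Bool |
      n < 2 * (Finset.univ.filter (fun i : ZMod n => ringFix n r σ i = true)).card}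

/-- There is a wall located `ℓ` vertices to the right of vertex `0`:
`σ_ℓ = 1` and `σ_{ℓ+1} = ⋯ = σ_{ℓ+(r+1)} = 0`. -/
def hasWallR (n r : ℕ) (σ : ZMod n → Bool) (ℓ : ℕ) : Prop :=
  σ ((ℓ : ℕ) : ZMod n) = true ∧ ∀ j ∈ Finset.Icc 1 (r + 1), σ (((ℓ + j : ℕ) : ZMod n)) = false

/-- There is a wall located `ℓ` vertices to the left of vertex `0`:
`σ_{−ℓ} = 1` and `σ_{−ℓ−1} = ⋯ = σ_{−ℓ−(r+1)} = 0`. -/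
def hasWallL (n r : ℕ) (σ : ZMod n → Bool) (ℓ : ℕ) : Prop :=
  σ (-((ℓ : ℕ) : ZMod n)) = true ∧
    ∀ j ∈ Finset.Icc 1 (r + 1), σ (-(((ℓ + j : ℕ) : ZMod n))) = false

open Classical in
/-- `R`: the smallest positive `ℓ` such that there is a wall located `ℓ` vertices to the
right of vertex `0`; equal to `n` if no such wall exists. -/
noncomputable def Rwall (n r : ℕ) (σ : ZMod n → Bool) : ℕ :=
  if h : ∃ ℓ, 0 < ℓ ∧ hasWallR n r σ ℓ then Nat.find h else n

open Classical in
/-- `L`: the smallest positive `ℓ` such that there is a wall located `ℓ` vertices to the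
left of vertex `0`; equal to `n` if no such wall exists. -/
noncomputable def Lwall (n r : ℕ) (σ : ZMod n → Bool) : ℕ :=
  if h : ∃ ℓ, 0 < ℓ ∧ hasWallL n r σ ℓ then Nat.find h else n

/-! The activity of vertex `0` plays no role: we bound `y = P(σ₀ = 0, R ≥ Δ)`. Let `π = p q^{r+1}`
be the probability of a wall at a given position. For `1 ≤ k ≤ K < Δ` with `k + r + 1 < n`, the
wall at `k` is independent of the coordinates left of `k`, and it is the first wall as soon as no
wall fits inside `(0, k)`, which `R ≥ Δ` guarantees; hence `P(σ₀ = 0, R = k) ≥ π y`. These `K`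
events and `{σ₀ = 0, R ≥ Δ}` are disjoint inside `{σ₀ = 0}`, so `(1 + K π) y ≤ q`. With
`K = min (Δ - 1) (n - r - 2)` we have `Δ ≤ K + r + 2`, and `π ≤ 1/4` turns this into the bound. -/

section Bernoulli

variable {V : Type} [Fintype V] {p : ℝ}

noncomputable def bernoulliMass (p : ℝ) (b : Bool) : ℝ := if b then p else 1 - p

noncomputable def configWeight (p : ℝ) (σ : V → Bool) : ℝ := ∏ v, bernoulliMass p (σ v)

lemma bernoulliMass_nonneg (hp0 : 0 ≤ p) (hp1 : p ≤ 1) (b : Bool) : 0 ≤ bernoulliMass p b := by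
  cases b <;> simp [bernoulliMass] <;> linarith

lemma configWeight_nonneg (hp0 : 0 ≤ p) (hp1 : p ≤ 1) (σ : V → Bool) : 0 ≤ configWeight p σ :=
  prod_nonneg fun v _ => bernoulliMass_nonneg hp0 hp1 (σ v)

variable [DecidableEq V]

lemma sum_configWeight (p : ℝ) : ∑ σ : V → Bool, configWeight p σ = 1 := by
  simp only [configWeight]
  rw [← Fintype.prod_sum fun (_ : V) b => bernoulliMass p b]
  simp [bernoulliMass]

lemma pr_eq_sum_indicator (p : ℝ) (S : Set (V → Bool)) :
    pr p S = ∑ σ, S.indicator (configWeight p) σ := rfl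

lemma pr_cylinder (F : Finset V) (τ : V → Bool) :
    pr p {σ | ∀ v ∈ F, σ v = τ v} = ∏ v ∈ F, bernoulliMass p (τ v) := by
  classical
  set g : V → Bool → ℝ := fun v b =>
    if v ∈ F then (if b = τ v then bernoulliMass p b else 0) else bernoulliMass p b
  have hind : ∀ σ : V → Bool,
      {σ : V → Bool | ∀ v ∈ F, σ v = τ v}.indicator (configWeight p) σ = ∏ v, g v (σ v) := by
    intro σ
    by_cases hσ : ∀ v ∈ F, σ v = τ v
    · rw [Set.indicator_of_mem (s := {σ : V → Bool | ∀ v ∈ F, σ v = τ v}) hσ]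
      exact prod_congr rfl fun v _ => by by_cases hv : v ∈ F <;> simp [g, hv, hσ]
    · rw [Set.indicator_of_notMem (s := {σ : V → Bool | ∀ v ∈ F, σ v = τ v}) hσ]
      push Not at hσ
      obtain ⟨v, hvF, hv⟩ := hσ
      exact (prod_eq_zero (mem_univ v) (by simp [g, hvF, hv])).symm
  have hsum : ∀ v, ∑ b, g v b = if v ∈ F then bernoulliMass p (τ v) else 1 := by
    intro v
    by_cases hv : v ∈ F
    · simp [g, hv]
    · simp [g, hv, bernoulliMass]
  rw [pr_eq_sum_indicator, sum_congr rfl fun σ _ => hind σ, ← Fintype.prod_sum,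
    prod_congr rfl fun v _ => hsum v, prod_ite_mem, univ_inter]

lemma expec_eq (p : ℝ) (f : (V → Bool) → ℝ) : expec p f = ∑ σ, f σ * configWeight p σ := rfl

lemma expec_mul_of_dependsOn {s : Set V} {f g : (V → Bool) → ℝ} (hf : DependsOn f s)
    (hg : DependsOn g sᶜ) : expec p (fun σ => f σ * g σ) = expec p f * expec p g := by
  classical
  let e := (Equiv.piEquivPiSubtypeProd (· ∈ s) fun _ => Bool).symm
  have he : ∀ a b v, e (a, b) v = if h : v ∈ s then a ⟨v, h⟩ else b ⟨v, h⟩ := fun _ _ _ => rfl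
  have hsplit : ∀ h : (V → Bool) → ℝ,
      expec p h = ∑ a, ∑ b, h (e (a, b)) * (configWeight p a * configWeight p b) := by
    intro h
    rw [expec_eq, ← e.sum_comp, Fintype.sum_prod_type]
    refine sum_congr rfl fun a _ => sum_congr rfl fun b _ => ?_
    rw [configWeight, ← Fintype.prod_subtype_mul_prod_subtype (· ∈ s)]
    congr 2 <;> refine prod_congr rfl fun x _ => ?_ <;> simp [he, x.2]
  have hprod : ∀ (F : (s → Bool) → ℝ) (G : ({v // v ∉ s} → Bool) → ℝ),
      ∑ a, ∑ b, F a * G b * (configWeight p a * configWeight p b)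
        = (∑ a, F a * configWeight p a) * ∑ b, G b * configWeight p b := by
    intro F G
    rw [sum_mul_sum]
    exact sum_congr rfl fun _ _ => sum_congr rfl fun _ _ => by ring
  obtain ⟨F, hF⟩ : ∃ F : (s → Bool) → ℝ, ∀ a b, f (e (a, b)) = F a :=
    ⟨fun a => f (e (a, fun _ => false)), fun a b => hf fun v hv => by simp [he, hv]⟩
  obtain ⟨G, hG⟩ : ∃ G : ({v // v ∉ s} → Bool) → ℝ, ∀ a b, g (e (a, b)) = G b :=
    ⟨fun b => g (e (fun _ => false, b)), fun a b => hg fun v hv => by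
      simp [he, show v ∉ s from hv]⟩
  have h1 := hprod F 1
  have h2 := hprod 1 G
  simp only [Pi.one_apply, one_mul, mul_one, sum_configWeight] at h1 h2
  simp only [hsplit, hF, hG, hprod, h1, h2]

lemma pr_eq_expec (p : ℝ) (S : Set (V → Bool)) : pr p S = expec p (S.indicator 1) := by
  classical
  simp only [pr_eq_sum_indicator, expec_eq, Set.indicator_apply]
  exact sum_congr rfl fun σ _ => by split_ifs <;> simp

lemma pr_inter_of_dependsOn {s : Set V} {S T : Set (V → Bool)} (hS : DependsOn (· ∈ S) s)
    (hT : DependsOn (· ∈ T) sᶜ) : pr p (S ∩ T) = pr p S * pr p T := by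
  have hind : ∀ {U : Set (V → Bool)} {t : Set V}, DependsOn (· ∈ U) t →
      DependsOn (U.indicator (1 : (V → Bool) → ℝ)) t := by
    intro U t hU σ τ hστ
    classical
    simp only [Set.indicator_apply, Pi.one_apply, hU hστ]
  rw [pr_eq_expec, pr_eq_expec, pr_eq_expec, Set.inter_indicator_one,
    ← expec_mul_of_dependsOn (hind hS) (hind hT)]
  rfl

lemma pr_nonneg (hp0 : 0 ≤ p) (hp1 : p ≤ 1) (S : Set (V → Bool)) : 0 ≤ pr p S :=
  sum_nonneg fun σ _ => Set.indicator_nonneg (fun σ _ => configWeight_nonneg hp0 hp1 σ) σ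

lemma pr_mono (hp0 : 0 ≤ p) (hp1 : p ≤ 1) {S T : Set (V → Bool)} (hST : S ⊆ T) :
    pr p S ≤ pr p T :=
  sum_le_sum fun σ _ => Set.indicator_le_indicator_of_subset hST (configWeight_nonneg hp0 hp1) σ

lemma pr_union {S T : Set (V → Bool)} (hST : Disjoint S T) :
    pr p (S ∪ T) = pr p S + pr p T := by
  simp only [pr_eq_sum_indicator, Set.indicator_union_of_disjoint hST, sum_add_distrib]

lemma pr_biUnion {ι : Type} (s : Finset ι) (A : ι → Set (V → Bool))
    (hA : (s : Set ι).PairwiseDisjoint A) :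
    pr p (⋃ i ∈ s, A i) = ∑ i ∈ s, pr p (A i) := by
  simp only [pr_eq_sum_indicator, Finset.indicator_biUnion_apply s A hA]
  exact sum_comm

end Bernoulli

section Walls

variable {n r : ℕ} {p : ℝ}

lemma pr_natCast_cylinder [NeZero n] (I : Finset ℕ) (hI : ∀ i ∈ I, i < n) (τ : ℕ → Bool) :
    pr p {σ : ZMod n → Bool | ∀ i ∈ I, σ i = τ i} = ∏ i ∈ I, bernoulliMass p (τ i) := by
  have hinj : Set.InjOn (Nat.cast : ℕ → ZMod n) I := fun a ha b hb hab => by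
    simpa [ZMod.val_cast_of_lt (hI a ha), ZMod.val_cast_of_lt (hI b hb)] using
      congrArg ZMod.val hab
  have hset : {σ : ZMod n → Bool | ∀ i ∈ I, σ i = τ i}
      = {σ | ∀ v ∈ I.image Nat.cast, σ v = τ (ZMod.val v)} := by
    ext σ
    simp +contextual [ZMod.val_cast_of_lt (hI _ _)]
  rw [hset, pr_cylinder, prod_image hinj]
  exact prod_congr rfl fun i hi => by rw [ZMod.val_cast_of_lt (hI i hi)]

lemma pr_origin_passive [NeZero n] (p : ℝ) :
    pr p {σ : ZMod n → Bool | σ 0 = false} = 1 - p := by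
  simpa [bernoulliMass] using
    pr_natCast_cylinder (n := n) (p := p) {0} (by simpa using NeZero.pos n) fun _ => false

lemma hasWallR_iff {σ : ZMod n → Bool} {k : ℕ} :
    hasWallR n r σ k ↔ ∀ i ∈ Icc k (k + r + 1), σ i = decide (i = k) := by
  constructor
  · rintro ⟨hk, hzero⟩ i hi
    obtain rfl | hik := eq_or_ne i k
    · simpa using hk
    · have := hzero (i - k) (mem_Icc.2 (by grind))
      rw [show k + (i - k) = i by grind] at this
      simpa [hik] using this
  · intro h
    refine ⟨by simpa using h k (by simp; omega), fun j hj => ?_⟩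
    have := h (k + j) (by grind)
    simpa [show j ≠ 0 by grind] using this

lemma pr_hasWallR [NeZero n] {k : ℕ} (hk : k + r + 1 < n) :
    pr p {σ : ZMod n → Bool | hasWallR n r σ k} = p * (1 - p) ^ (r + 1) := by
  simp only [hasWallR_iff]
  rw [pr_natCast_cylinder _ (fun i hi => by grind), ← insert_Icc_add_one_left_eq_Icc (by omega),
    prod_insert (by simp)]
  rw [prod_congr rfl fun i hi => show bernoulliMass p (decide (i = k)) = 1 - p by
    simp [bernoulliMass, show i ≠ k by grind]]
  simp [bernoulliMass, show k + r + 1 - k = r + 1 by omega]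

lemma dependsOn_hasWallR {k : ℕ} (hk : k + r + 1 < n) :
    DependsOn (fun σ : ZMod n → Bool => hasWallR n r σ k)
      {v | k ≤ ZMod.val v ∧ ZMod.val v ≤ k + r + 1} := by
  intro σ τ h
  have hστ : ∀ i ∈ Icc k (k + r + 1), σ i = τ i := fun i hi =>
    h _ (by have := mem_Icc.1 hi; simp [ZMod.val_cast_of_lt (show i < n by omega), this])
  simp only [eq_iff_iff, hasWallR_iff]
  exact forall₂_congr fun i hi => by rw [hστ i hi]

def noWallBelow (n r k : ℕ) : Set (ZMod n → Bool) :=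
  {σ | σ 0 = false ∧ ∀ ℓ, 0 < ℓ → ℓ + r + 1 < k → ¬ hasWallR n r σ ℓ}

lemma dependsOn_noWallBelow [NeZero n] {k : ℕ} (hk0 : 0 < k) (hkn : k ≤ n) :
    DependsOn (· ∈ noWallBelow n r k) {v | ZMod.val v < k} := by
  intro σ τ h
  simp only [noWallBelow, Set.mem_ofPred_eq, eq_iff_iff]
  refine and_congr (by rw [h 0 (by simpa using hk0)]) (forall_congr' fun ℓ =>
    imp_congr_right fun _ => imp_congr_right fun hℓ => not_congr (Iff.of_eq ?_))
  exact dependsOn_hasWallR (by omega) fun v ⟨_, hv⟩ => h v (show ZMod.val v < k by omega)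

lemma hasWallR_congr {σ : ZMod n → Bool} {ℓ ℓ' : ℕ} (h : (ℓ : ZMod n) = ℓ') :
    hasWallR n r σ ℓ ↔ hasWallR n r σ ℓ' := by
  simp only [hasWallR, Nat.cast_add, h]

lemma Rwall_le [NeZero n] (σ : ZMod n → Bool) : Rwall n r σ ≤ n := by
  classical
  unfold Rwall
  split_ifs with h
  · by_contra! hlt
    obtain ⟨-, hw⟩ := Nat.find_spec h
    refine Nat.find_min h (m := Nat.find h - n) (by have := NeZero.pos n; omega)
      ⟨by omega, (hasWallR_congr ?_).2 hw⟩
    rw [Nat.cast_sub hlt.le, ZMod.natCast_self, sub_zero]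
  · exact le_rfl

lemma Rwall_le_of_hasWallR {σ : ZMod n → Bool} {ℓ : ℕ} (hℓ : 0 < ℓ) (hw : hasWallR n r σ ℓ) :
    Rwall n r σ ≤ ℓ := by
  classical
  rw [Rwall, dif_pos ⟨ℓ, hℓ, hw⟩]
  exact Nat.find_min' _ ⟨hℓ, hw⟩

/-- A wall starting in `[k - r - 1, k)` would need `σ_k = 0`. -/
lemma Rwall_eq_of_hasWallR {σ : ZMod n → Bool} {k : ℕ} (hk : 0 < k) (hw : hasWallR n r σ k)
    (hbelow : ∀ ℓ, 0 < ℓ → ℓ + r + 1 < k → ¬ hasWallR n r σ ℓ) : Rwall n r σ = k := by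
  classical
  rw [Rwall, dif_pos ⟨k, hk, hw⟩, Nat.find_eq_iff]
  refine ⟨⟨hk, hw⟩, fun ℓ hℓk ⟨hℓ, hwℓ⟩ => ?_⟩
  by_cases hfar : ℓ + r + 1 < k
  · exact hbelow ℓ hℓ hfar hwℓ
  · have := hwℓ.2 (k - ℓ) (mem_Icc.2 (by omega))
    rw [show ℓ + (k - ℓ) = k by omega, hw.1] at this
    exact Bool.noConfusion this

end Walls

lemma tail_bound_Rwall {n r : ℕ} [NeZero n] {p : ℝ} (hp0 : 0 ≤ p) (hp1 : p ≤ 1) {Δ K : ℕ}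
    (hKΔ : K < Δ) (hKn : K + r + 1 < n) :
    (1 + K * (p * (1 - p) ^ (r + 1))) * pr p {σ : ZMod n → Bool | σ 0 = false ∧ Δ ≤ Rwall n r σ}
      ≤ 1 - p := by
  set X := {σ : ZMod n → Bool | σ 0 = false ∧ Δ ≤ Rwall n r σ}
  set E : ℕ → Set (ZMod n → Bool) := fun k => {σ | σ 0 = false ∧ Rwall n r σ = k}
  have hE : ∀ k ∈ Icc 1 K, p * (1 - p) ^ (r + 1) * pr p X ≤ pr p (E k) := by
    intro k hk
    obtain ⟨hk1, hkK⟩ := mem_Icc.1 hk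
    have hXsub : X ⊆ noWallBelow n r k := fun σ ⟨h0, hΔ⟩ =>
      ⟨h0, fun ℓ hℓ _ hw => by have := Rwall_le_of_hasWallR hℓ hw; omega⟩
    have hindep := pr_inter_of_dependsOn (p := p) (S := noWallBelow n r k)
      (T := {σ | hasWallR n r σ k}) (dependsOn_noWallBelow hk1 (by omega))
      ((dependsOn_hasWallR (k := k) (by omega)).mono fun v hv => by
        simp only [Set.mem_compl_iff, Set.mem_ofPred_eq, not_lt]; exact hv.1)
    calc p * (1 - p) ^ (r + 1) * pr p X
        ≤ pr p (noWallBelow n r k) * pr p {σ | hasWallR n r σ k} := by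
          rw [pr_hasWallR (by omega), mul_comm]
          exact mul_le_mul_of_nonneg_right (pr_mono hp0 hp1 hXsub)
            (mul_nonneg hp0 (pow_nonneg (by linarith) _))
      _ = pr p (noWallBelow n r k ∩ {σ | hasWallR n r σ k}) := hindep.symm
      _ ≤ pr p (E k) := pr_mono hp0 hp1 fun σ ⟨⟨h0, hbelow⟩, hw⟩ =>
          ⟨h0, Rwall_eq_of_hasWallR hk1 hw hbelow⟩
  have hdisj : Disjoint (⋃ k ∈ Icc 1 K, E k) X := by
    refine Set.disjoint_left.2 fun σ hσ ⟨_, hΔ⟩ => ?_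
    obtain ⟨k, hk, -, hRk⟩ := Set.mem_iUnion₂.1 hσ
    have := (mem_Icc.1 hk).2
    omega
  calc (1 + K * (p * (1 - p) ^ (r + 1))) * pr p X
      = ∑ _k ∈ Icc 1 K, p * (1 - p) ^ (r + 1) * pr p X + pr p X := by
        rw [sum_const, Nat.card_Icc, nsmul_eq_mul]; push_cast; ring
    _ ≤ ∑ k ∈ Icc 1 K, pr p (E k) + pr p X := by gcongr with k hk; exact hE k hk
    _ = pr p ((⋃ k ∈ Icc 1 K, E k) ∪ X) := by
        rw [pr_union hdisj, pr_biUnion]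
        intro i _ j _ hij
        exact Set.disjoint_left.2 fun σ ⟨_, hi⟩ ⟨_, hj⟩ => hij (hi.symm.trans hj)
    _ ≤ pr p {σ : ZMod n → Bool | σ 0 = false} :=
        pr_mono hp0 hp1 (Set.union_subset (Set.iUnion₂_subset fun _ _ _ h => h.1) fun _ h => h.1)
    _ = 1 - p := pr_origin_passive p

lemma div_le_far_wall_bound {p y : ℝ} (hp : 0 < p) (hp1 : p < 1) {r K Δ : ℕ} (hΔ : 0 < Δ)
    (hΔK : Δ ≤ K + r + 2) (hy : 0 ≤ y) (h : (1 + K * (p * (1 - p) ^ (r + 1))) * y ≤ 1 - p) :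
    y / (1 - p) ≤ (1 / (Δ : ℝ)) * ((1 - p)⁻¹ ^ r * (r * (1 - p) ^ r + 1 / (p * (1 - p)))) := by
  set q := 1 - p
  set π := p * q ^ (r + 1) with hπ_def
  have hq : 0 < q := by linarith
  have hπ : 0 < π := by positivity
  have hπ_half : 2 * π ≤ 1 := by
    have : q ^ (r + 1) ≤ q := pow_le_of_le_one hq.le (by linarith) (by omega)
    nlinarith [sq_nonneg (p - q)]
  have hrhs : (1 / (Δ : ℝ)) * (q⁻¹ ^ r * (r * q ^ r + 1 / (p * q))) = (r + π⁻¹) / Δ := by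
    rw [hπ_def, inv_pow]
    field_simp
    ring
  have hcoef : (K + r + 2 : ℝ) ≤ (r + π⁻¹) * (1 + K * π) := by
    have : 2 ≤ π⁻¹ := by rw [le_inv_comm₀ two_pos hπ]; linarith
    have : (r + π⁻¹) * (1 + K * π) = r + r * K * π + π⁻¹ + K := by field_simp; ring
    nlinarith [mul_nonneg (mul_nonneg (Nat.cast_nonneg r) (Nat.cast_nonneg K)) hπ.le]
  rw [hrhs, div_le_div_iff₀ hq (by exact_mod_cast hΔ)]
  calc y * Δ ≤ y * (K + r + 2) := by gcongr; exact_mod_cast hΔK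
    _ ≤ y * ((r + π⁻¹) * (1 + K * π)) := by gcongr
    _ = (r + π⁻¹) * ((1 + K * π) * y) := by ring
    _ ≤ (r + π⁻¹) * q := by gcongr

/-- `P_p(X_0(n,r) = 1, R ≥ Δ | σ_0 = 0) ≤ (1/Δ)·q^{−r}·(r·q^r + 1/(pq))` where `q = 1−p`.
The conditional probability is written as `P_p(event ∩ condition)/P_p(condition)`. -/
theorem far_right_wall (p : ℝ) (hp : 0 < p) (hp1 : p < 1) (r Δ n : ℕ)
    (hΔ : 0 < Δ) (hn : 2 * r + 1 < n) :
    haveI : NeZero n := ⟨by omega⟩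
    pr p {σ : ZMod n → Bool |
        ringFix n r σ 0 = true ∧ Δ ≤ Rwall n r σ ∧ σ 0 = false} /
      pr p {σ : ZMod n → Bool | σ 0 = false}
      ≤ (1 / (Δ : ℝ)) * ((1 - p)⁻¹ ^ r * (r * (1 - p) ^ r + 1 / (p * (1 - p)))) := by
  have : NeZero n := ⟨by omega⟩
  set Y := {σ : ZMod n → Bool | σ 0 = false ∧ Δ ≤ Rwall n r σ}
  obtain ⟨K, hΔK, hK⟩ : ∃ K : ℕ,
      Δ ≤ K + r + 2 ∧ (1 + K * (p * (1 - p) ^ (r + 1))) * pr p Y ≤ 1 - p := by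
    by_cases hΔn : Δ ≤ n
    · exact ⟨min (Δ - 1) (n - r - 2), by omega,
        tail_bound_Rwall hp.le hp1.le (by omega) (by omega)⟩
    · have hY : Y = ∅ := Set.eq_empty_of_forall_notMem fun σ ⟨_, hR⟩ => by
        have := Rwall_le (r := r) σ
        omega
      exact ⟨Δ - 1, by omega, by simp [hY, pr]; linarith⟩
  rw [pr_origin_passive]
  calc _ ≤ pr p Y / (1 - p) :=
        div_le_div_of_nonneg_right (pr_mono hp.le hp1.le fun σ h => ⟨h.2.2, h.2.1⟩) (by linarith)
    _ ≤ _ := div_le_far_wall_bound hp hp1 hΔ hΔK (pr_nonneg hp.le hp1.le Y) hK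
end

section
/- Let 0 < p < 1/2, q = 1−p, and let r, Δ be positive integers, with n > 2r+1. Then P_p(X_0(n,r) = 1 and L < Δ and R < Δ | σ_0 = 0) ≤ 2Δ·(4pq)^r. -/
open Finset


/-! Behind a wall at `a` the `r + 1` passive sites `a + 1, …, a + r + 1` have at most `r` active
neighbours at any time, so they never activate; the same holds behind the left wall. Hence the
first initially passive site of the window `(-L, R)` to activate sees only initially active
neighbours, so if `0` activates, some `c` in the window has at least `r + 1` active neighbours
already in `σ`. For fixed `c`, tilting the `2r` neighbours of `c` by the likelihood ratio
`(1 - p) / p` bounds `P(σ₀ = 0, c has ≥ r + 1 active neighbours)` by `p (4pq)^r ≤ q (4pq)^r`.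
A union bound over the fewer than `2Δ` candidates and `P(σ₀ = 0) = q` conclude. -/

lemma prod_bernoulli_nonneg {V : Type} [Fintype V] {p : ℝ} (hp₀ : 0 ≤ p) (hp₁ : p ≤ 1)
    (σ : V → Bool) : 0 ≤ ∏ v, (if σ v then p else 1 - p) :=
  prod_nonneg fun v _ => by split <;> linarith

section Bernoulli

variable {V : Type} [Fintype V] [DecidableEq V] {p : ℝ}

lemma sum_prod_apply_eq_prod_add (g : V → Bool → ℝ) :
    ∑ σ : V → Bool, ∏ v, g v (σ v) = ∏ v, (g v true + g v false) := by
  simp only [← Fintype.sum_bool, Fintype.prod_sum]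

lemma pr_le_sum_of_subset_biUnion {ι : Type*} (hp₀ : 0 ≤ p) (hp₁ : p ≤ 1)
    {S : Set (V → Bool)} (J : Finset ι) (E : ι → Set (V → Bool))
    (hS : S ⊆ ⋃ j ∈ J, E j) :
    pr p S ≤ ∑ j ∈ J, pr p (E j) := by
  unfold pr
  rw [sum_comm]
  refine sum_le_sum fun σ _ => ?_
  have hind : ∀ T : Set (V → Bool),
      0 ≤ T.indicator (fun τ => ∏ v, (if τ v then p else 1 - p)) σ :=
    fun T => Set.indicator_nonneg (fun τ _ => prod_bernoulli_nonneg hp₀ hp₁ τ) σ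
  by_cases hσ : σ ∈ S
  · obtain ⟨j, hj, hσj⟩ := Set.mem_iUnion₂.1 (hS hσ)
    refine le_trans ?_ (single_le_sum (fun i _ => hind (E i)) hj)
    rw [Set.indicator_of_mem hσ, Set.indicator_of_mem hσj]
  · rw [Set.indicator_of_notMem hσ]
    exact sum_nonneg fun j _ => hind (E j)

lemma pr_le_mul_prod_add {S : Set (V → Bool)} {c : ℝ} (hc : 0 ≤ c) (g : V → Bool → ℝ)
    (hg : ∀ v b, 0 ≤ g v b)
    (hS : ∀ σ ∈ S, ∏ v, (if σ v then p else 1 - p) ≤ c * ∏ v, g v (σ v)) :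
    pr p S ≤ c * ∏ v, (g v true + g v false) := by
  rw [← sum_prod_apply_eq_prod_add, mul_sum]
  refine sum_le_sum fun σ _ => ?_
  by_cases hσ : σ ∈ S
  · rw [Set.indicator_of_mem hσ]
    exact hS σ hσ
  · rw [Set.indicator_of_notMem hσ]
    exact mul_nonneg hc (prod_nonneg fun v _ => hg v _)

lemma pr_apply_eq_false (v₀ : V) : pr p {σ : V → Bool | σ v₀ = false} = 1 - p := by
  let g : V → Bool → ℝ := fun v b => if v = v₀ ∧ b then 0 else if b then p else 1 - p
  calc pr p {σ : V → Bool | σ v₀ = false} = ∑ σ : V → Bool, ∏ v, g v (σ v) := by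
        refine sum_congr rfl fun σ _ => ?_
        by_cases hσ : σ v₀ = false
        · rw [Set.indicator_of_mem (show σ ∈ {σ : V → Bool | σ v₀ = false} from hσ)]
          exact prod_congr rfl fun v _ => by by_cases hv : v = v₀ <;> simp [g, hv, hσ]
        · rw [Set.indicator_of_notMem (show σ ∉ {σ : V → Bool | σ v₀ = false} from hσ)]
          exact (prod_eq_zero (mem_univ v₀) (by simp_all [g])).symm
    _ = 1 - p := by
        rw [sum_prod_apply_eq_prod_add, prod_eq_single v₀ (fun v _ hv => by simp [g, hv])
          (by simp)]
        simp [g]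

theorem pr_apply_eq_false_and_le_card_filter (hp : 0 < p) (hp₂ : p ≤ 1 / 2) (v₀ : V)
    (N : Finset V) (m : ℕ) :
    pr p {σ : V → Bool | σ v₀ = false ∧ m ≤ #{v ∈ N | σ v = true}}
      ≤ (p / (1 - p)) ^ m * ((1 - p) * (2 * (1 - p)) ^ #N) := by
  have hq : 0 < 1 - p := by linarith
  set θ := (1 - p) / p with hθ
  -- exponential tilt: multiplying the weight of `σ v = true` by `θ` on `N` makes every coordinate
  -- of `N` weigh `1 - p` at both values
  let g : V → Bool → ℝ := fun v b =>
    if v = v₀ then (if b then 0 else 1 - p) else if v ∈ N then 1 - p else if b then p else 1 - p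
  have htilt : ∀ σ : V → Bool, σ v₀ = false → ∏ v, g v (σ v)
      = (∏ v, (if σ v then p else 1 - p)) * θ ^ #{v ∈ N | σ v = true} := by
    intro σ hσ
    have hN : ∏ v ∈ N, θ ^ (if σ v then 1 else 0)
        = ∏ v, if v ∈ N then θ ^ (if σ v then 1 else 0) else 1 := by
      rw [prod_ite_mem, univ_inter]
    rw [card_filter, ← prod_pow_eq_pow_sum, hN, ← prod_mul_distrib]
    refine prod_congr rfl fun v _ => ?_
    by_cases hv : v = v₀
    · subst hv
      simp [g, hσ]
    · by_cases hvN : v ∈ N <;> cases σ v <;> simp [g, hv, hvN, θ]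
      field_simp
  refine le_trans (pr_le_mul_prod_add (c := (p / (1 - p)) ^ m) (by positivity) g
    (fun v b => by simp only [g]; split_ifs <;> linarith) fun σ ⟨hσ, hm⟩ => ?_) ?_
  · have hθm : 1 ≤ (p / (1 - p)) ^ m * θ ^ #{v ∈ N | σ v = true} :=
      calc (1 : ℝ) = (p / (1 - p)) ^ m * θ ^ m := by
            rw [← mul_pow, show p / (1 - p) * θ = 1 by rw [hθ]; field_simp, one_pow]
        _ ≤ (p / (1 - p)) ^ m * θ ^ #{v ∈ N | σ v = true} := by
            gcongr
            rw [le_div_iff₀ hp]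
            linarith
    calc ∏ v, (if σ v then p else 1 - p)
        ≤ (∏ v, (if σ v then p else 1 - p))
            * ((p / (1 - p)) ^ m * θ ^ #{v ∈ N | σ v = true}) :=
          le_mul_of_one_le_right (prod_bernoulli_nonneg hp.le (by linarith) σ) hθm
      _ = (p / (1 - p)) ^ m * ∏ v, g v (σ v) := by rw [htilt σ hσ]; ring
  · gcongr
    calc ∏ v, (g v true + g v false)
        ≤ ∏ v, ((if v = v₀ then 1 - p else 1) * (if v ∈ N then 2 * (1 - p) else 1)) :=
          prod_le_prod (fun v _ => by simp only [g]; split_ifs <;> linarith)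
            (fun v _ => by simp only [g]; split_ifs <;> nlinarith)
      _ = (1 - p) * (2 * (1 - p)) ^ #N := by
          rw [prod_mul_distrib, prod_ite_eq', if_pos (mem_univ _), prod_ite_mem, univ_inter,
            prod_const]

end Bernoulli

section Ring

variable {n r : ℕ}

def ringNbrs (n r : ℕ) (c : ZMod n) : Finset (ZMod n) :=
  (Icc 1 r).image (fun k : ℕ => c + k) ∪ (Icc 1 r).image (fun k : ℕ => c - k)

lemma card_ringNbrs_le (c : ZMod n) : #(ringNbrs n r c) ≤ 2 * r :=
  calc #(ringNbrs n r c) ≤ #(Icc 1 r) + #(Icc 1 r) :=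
        (card_union_le _ _).trans (add_le_add card_image_le card_image_le)
    _ = 2 * r := by rw [Nat.card_Icc]; omega

lemma activeNbrs_eq_card_filter (hn : 2 * r + 1 < n) (σ : ZMod n → Bool) (c : ZMod n) :
    activeNbrs n r σ c = #{v ∈ ringNbrs n r c | σ v = true} := by
  have hinj : Set.InjOn (Nat.cast : ℕ → ZMod n) (Icc 1 r) := fun k hk l hl hkl => by
    rw [coe_Icc, Set.mem_Icc] at hk hl
    rwa [ZMod.natCast_eq_natCast_iff', Nat.mod_eq_of_lt (by omega),
      Nat.mod_eq_of_lt (by omega)] at hkl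
  have hdisj :
      Disjoint ((Icc 1 r).image (fun k : ℕ => c + k))
        ((Icc 1 r).image (fun k : ℕ => c - k)) := by
    refine disjoint_left.2 fun v hv hv' => ?_
    obtain ⟨k, hk, rfl⟩ := mem_image.1 hv
    obtain ⟨l, hl, hkl⟩ := mem_image.1 hv'
    rw [mem_Icc] at hk hl
    have : ((l + k : ℕ) : ZMod n) = 0 := by push_cast; linear_combination -hkl
    have := Nat.le_of_dvd (by omega) ((ZMod.natCast_eq_zero_iff _ _).1 this)
    omega
  rw [card_filter, ringNbrs, sum_union hdisj,
    sum_image fun k hk l hl h => hinj hk hl (add_left_cancel h),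
    sum_image fun k hk l hl h => hinj hk hl (sub_right_inj.1 h), ← sum_add_distrib]
  rfl

lemma pr_apply_zero_eq_false_and_activeNbrs_ge [NeZero n] {p : ℝ} (hp : 0 < p) (hp₂ : p < 1 / 2)
    (hn : 2 * r + 1 < n) (c : ZMod n) :
    pr p {σ : ZMod n → Bool | σ 0 = false ∧ r + 1 ≤ activeNbrs n r σ c}
      ≤ (1 - p) * (4 * p * (1 - p)) ^ r := by
  have hq : 0 < 1 - p := by linarith
  simp only [activeNbrs_eq_card_filter hn]
  calc _ ≤ (p / (1 - p)) ^ (r + 1) * ((1 - p) * (2 * (1 - p)) ^ #(ringNbrs n r c)) :=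
        pr_apply_eq_false_and_le_card_filter hp hp₂.le 0 _ (r + 1)
    _ ≤ (p / (1 - p)) ^ (r + 1) * ((1 - p) * (2 * (1 - p)) ^ (2 * r)) := by
        gcongr
        · linarith
        · exact card_ringNbrs_le c
    _ = p * (p / (1 - p) * (2 * (1 - p)) ^ 2) ^ r := by
        rw [pow_mul, mul_pow (p / (1 - p)), pow_succ]
        field_simp
    _ = p * (4 * p * (1 - p)) ^ r := by
        congr 2
        field_simp
        ring
    _ ≤ (1 - p) * (4 * p * (1 - p)) ^ r := by
        gcongr
        linarith

end Ring

section Dynamics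

variable {n r : ℕ}

lemma activeNbrs_le_activeNbrs {σ τ : ZMod n → Bool} {c : ZMod n}
    (h : ∀ k ∈ Icc 1 r,
      (τ (c + k) = true → σ (c + k) = true) ∧ (τ (c - k) = true → σ (c - k) = true)) :
    activeNbrs n r τ c ≤ activeNbrs n r σ c := by
  have hind : ∀ v, (τ v = true → σ v = true) →
      (if τ v then 1 else 0) ≤ if σ v then 1 else 0 := by
    intro v hv
    cases hτ : τ v <;> simp_all
  exact sum_le_sum fun k hk => add_le_add (hind _ (h k hk).1) (hind _ (h k hk).2)

lemma exists_activeNbrs_ge_of_iterate_ringStep {σ : ZMod n → Bool} (W C : Set (ZMod n))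
    (hC : ∀ v ∈ W, σ v = false → ∀ t, (ringStep n r)^[t] σ v = true → v ∈ C)
    (hW : ∀ v ∈ C, ∀ k ∈ Icc 1 r, v + k ∈ W ∧ v - k ∈ W)
    {v₀ : ZMod n} {t₀ : ℕ} (hv₀ : v₀ ∈ W) (hσv₀ : σ v₀ = false)
    (ht₀ : (ringStep n r)^[t₀] σ v₀ = true) :
    ∃ v ∈ C, r + 1 ≤ activeNbrs n r σ v := by
  by_contra! hmaj
  -- a first site of `W` to activate would lie in `C` and see only initially active neighbours
  have hstuck : ∀ t, ∀ v ∈ W, (ringStep n r)^[t] σ v = true → σ v = true := by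
    intro t
    induction t with
    | zero => exact fun v _ h => h
    | succ t ih =>
      intro v hv ht
      by_contra hσv
      rw [Bool.not_eq_true] at hσv
      have hvC := hC v hv hσv (t + 1) ht
      rw [Function.iterate_succ_apply', ringStep, Bool.or_eq_true, decide_eq_true_eq] at ht
      rcases ht with ht | ht
      · simp [ih v hv ht] at hσv
      · have := activeNbrs_le_activeNbrs
          (fun k hk => ⟨ih _ (hW v hvC k hk).1, ih _ (hW v hvC k hk).2⟩)
        have := hmaj v hvC
        omega
  simp [hstuck t₀ v₀ hv₀ ht₀] at hσv₀

lemma sum_Icc_ite_lt_add_ite_le {i : ℕ} (hi : i ∈ Icc 1 (r + 1)) :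
    ∑ k ∈ Icc 1 r, ((if r + 1 < k + i then 1 else 0) + (if i ≤ k then 1 else 0)) = r := by
  rw [mem_Icc] at hi
  rw [sum_add_distrib, ← card_filter, ← card_filter,
    show {k ∈ Icc 1 r | r + 1 < k + i} = Icc (r + 2 - i) r by
      ext k; simp only [mem_filter, mem_Icc]; omega,
    show {k ∈ Icc 1 r | i ≤ k} = Icc i r by
      ext k; simp only [mem_filter, mem_Icc]; omega,
    Nat.card_Icc, Nat.card_Icc]
  omega

theorem hasWallR.iterate_ringStep_eq_false {σ : ZMod n → Bool} {a : ℕ} (hw : hasWallR n r σ a)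
    (t : ℕ) :
    ∀ i ∈ Icc 1 (r + 1), (ringStep n r)^[t] σ ((a + i : ℕ) : ZMod n) = false := by
  induction t with
  | zero => exact hw.2
  | succ t ih =>
    intro i hi
    have hi' := mem_Icc.1 hi
    have hblock : ∀ (P : Prop) [Decidable P] (x : ZMod n),
        (¬P → (ringStep n r)^[t] σ x = false) →
        (if (ringStep n r)^[t] σ x then 1 else 0) ≤ if P then 1 else 0 := by
      intro P _ x hx
      by_cases hP : P
      · simp only [hP, if_true]
        split <;> omega
      · simp [hP, hx hP]
    -- active neighbours of `a + i` lie beyond the block (`i - 1` sites) or at most at `a`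
    -- (`r + 1 - i` sites)
    have hle : activeNbrs n r ((ringStep n r)^[t] σ) ((a + i : ℕ) : ZMod n) ≤ r := by
      refine le_trans (sum_le_sum fun k hk => add_le_add (hblock _ _ fun h => ?_)
        (hblock _ _ fun h => ?_)) (sum_Icc_ite_lt_add_ite_le hi).le
      · rw [mem_Icc] at hk
        rw [show ((a + i : ℕ) : ZMod n) + k = ((a + (i + k) : ℕ) : ZMod n) by push_cast; ring]
        exact ih _ (mem_Icc.2 ⟨by omega, by omega⟩)
      · rw [mem_Icc] at hk
        obtain ⟨l, rfl⟩ : ∃ l, i = l + k := ⟨i - k, by omega⟩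
        rw [show ((a + (l + k) : ℕ) : ZMod n) - k = ((a + l : ℕ) : ZMod n) by push_cast; ring]
        exact ih _ (mem_Icc.2 ⟨by omega, by omega⟩)
    rw [Function.iterate_succ_apply', ringStep, ih i hi, Bool.false_or, decide_eq_false_iff_not]
    omega

lemma activeNbrs_comp_neg (σ : ZMod n → Bool) (v : ZMod n) :
    activeNbrs n r (σ ∘ Neg.neg) v = activeNbrs n r σ (-v) :=
  sum_congr rfl fun k _ => by
    simp only [Function.comp_apply, neg_add', neg_sub', sub_neg_eq_add]
    exact Nat.add_comm _ _

lemma commute_ringStep_comp_neg : Function.Commute (ringStep n r) (· ∘ Neg.neg) := fun σ => by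
  funext v
  simp only [ringStep, Function.comp_apply, activeNbrs_comp_neg]

theorem hasWallL.iterate_ringStep_eq_false {σ : ZMod n → Bool} {b : ℕ} (hw : hasWallL n r σ b)
    (t : ℕ) :
    ∀ i ∈ Icc 1 (r + 1), (ringStep n r)^[t] σ (-((b + i : ℕ) : ZMod n)) = false := by
  intro i hi
  have := hasWallR.iterate_ringStep_eq_false (σ := σ ∘ Neg.neg) hw t i hi
  rwa [(commute_ringStep_comp_neg.iterate_left t) σ] at this

theorem hasWallR.apply_eq_true_of_iterate_ringStep {σ : ZMod n → Bool} {a i : ℕ}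
    (hw : hasWallR n r σ a) (hi : i ≤ r + 1) (t : ℕ)
    (ht : (ringStep n r)^[t] σ ((a + i : ℕ) : ZMod n) = true) :
    σ ((a + i : ℕ) : ZMod n) = true := by
  rcases Nat.eq_zero_or_pos i with rfl | hi₀
  · exact hw.1
  · rw [hw.iterate_ringStep_eq_false t i (mem_Icc.2 ⟨hi₀, hi⟩)] at ht
    exact absurd ht Bool.false_ne_true

theorem hasWallL.apply_eq_true_of_iterate_ringStep {σ : ZMod n → Bool} {b i : ℕ}
    (hw : hasWallL n r σ b) (hi : i ≤ r + 1) (t : ℕ)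
    (ht : (ringStep n r)^[t] σ (-((b + i : ℕ) : ZMod n)) = true) :
    σ (-((b + i : ℕ) : ZMod n)) = true := by
  rcases Nat.eq_zero_or_pos i with rfl | hi₀
  · exact hw.1
  · rw [hw.iterate_ringStep_eq_false t i (mem_Icc.2 ⟨hi₀, hi⟩)] at ht
    exact absurd ht Bool.false_ne_true

lemma exists_activeNbrs_ge_between_walls {σ : ZMod n → Bool} {a b t : ℕ}
    (ha : hasWallR n r σ a) (hb : hasWallL n r σ b) (h0 : σ 0 = false)
    (ht : (ringStep n r)^[t] σ 0 = true) :
    ∃ j : ℤ, -(b : ℤ) < j ∧ j < a ∧ r + 1 ≤ activeNbrs n r σ j := by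
  set W := (Int.cast : ℤ → ZMod n) '' Set.Icc (-(b + r + 1 : ℤ)) (a + r + 1)
  set C := (Int.cast : ℤ → ZMod n) '' Set.Ioo (-(b : ℤ)) a
  have hC : ∀ v ∈ W, σ v = false → ∀ s, (ringStep n r)^[s] σ v = true → v ∈ C := by
    rintro _ ⟨j, hj, rfl⟩ hσj s hs
    rw [Set.mem_Icc] at hj
    refine ⟨j, Set.mem_Ioo.2 ⟨?_, ?_⟩, rfl⟩
    · by_contra! hjb
      obtain ⟨i, rfl⟩ : ∃ i : ℕ, j = -((b + i : ℕ) : ℤ) :=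
        ⟨(-j - b).toNat, by omega⟩
      rw [Int.cast_neg, Int.cast_natCast] at hσj hs
      exact Bool.false_ne_true <|
        hσj.symm.trans (hb.apply_eq_true_of_iterate_ringStep (by omega) s hs)
    · by_contra! hja
      obtain ⟨i, rfl⟩ : ∃ i : ℕ, j = ((a + i : ℕ) : ℤ) := ⟨(j - a).toNat, by omega⟩
      rw [Int.cast_natCast] at hσj hs
      exact Bool.false_ne_true <|
        hσj.symm.trans (ha.apply_eq_true_of_iterate_ringStep (by omega) s hs)
  have hW : ∀ v ∈ C, ∀ k ∈ Icc 1 r, v + k ∈ W ∧ v - k ∈ W := by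
    rintro _ ⟨j, hj, rfl⟩ k hk
    rw [Set.mem_Ioo] at hj
    rw [mem_Icc] at hk
    exact ⟨⟨j + k, Set.mem_Icc.2 ⟨by omega, by omega⟩, by push_cast; ring⟩,
      ⟨j - k, Set.mem_Icc.2 ⟨by omega, by omega⟩, by push_cast; ring⟩⟩
  obtain ⟨_, ⟨j, hj, rfl⟩, hmaj⟩ := exists_activeNbrs_ge_of_iterate_ringStep W C hC hW
    ⟨0, Set.mem_Icc.2 ⟨by omega, by omega⟩, Int.cast_zero⟩ h0 ht
  exact ⟨j, (Set.mem_Ioo.1 hj).1, (Set.mem_Ioo.1 hj).2, hmaj⟩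

lemma Rwall_eq_or_hasWallR (σ : ZMod n → Bool) :
    Rwall n r σ = n ∨ hasWallR n r σ (Rwall n r σ) := by
  classical
  unfold Rwall
  split_ifs with h
  · exact Or.inr (Nat.find_spec h).2
  · exact Or.inl rfl

lemma Lwall_eq_or_hasWallL (σ : ZMod n → Bool) :
    Lwall n r σ = n ∨ hasWallL n r σ (Lwall n r σ) := by
  classical
  unfold Lwall
  split_ifs with h
  · exact Or.inr (Nat.find_spec h).2
  · exact Or.inl rfl

lemma exists_activeNbrs_ge_of_walls_lt [NeZero n] {Δ : ℕ} {σ : ZMod n → Bool}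
    (h0 : σ 0 = false) (hfix : ringFix n r σ 0 = true) (hL : Lwall n r σ < Δ)
    (hR : Rwall n r σ < Δ) :
    ∃ j ∈ Ioo (-(Δ : ℤ)) Δ, r + 1 ≤ activeNbrs n r σ j := by
  have hnΔ : n < Δ → ∃ j ∈ Ioo (-(Δ : ℤ)) Δ, r + 1 ≤ activeNbrs n r σ j := by
    intro hnΔ
    obtain ⟨v, -, hv⟩ := exists_activeNbrs_ge_of_iterate_ringStep Set.univ Set.univ
      (fun _ _ _ _ _ => trivial) (fun _ _ _ _ => ⟨trivial, trivial⟩) (Set.mem_univ 0) h0 hfix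
    have := ZMod.val_lt v
    exact ⟨v.val, mem_Ioo.2 ⟨by omega, by omega⟩, by simpa using hv⟩
  rcases Lwall_eq_or_hasWallL σ with hLn | hLw
  · exact hnΔ (hLn ▸ hL)
  rcases Rwall_eq_or_hasWallR σ with hRn | hRw
  · exact hnΔ (hRn ▸ hR)
  obtain ⟨j, hjL, hjR, hj⟩ := exists_activeNbrs_ge_between_walls hRw hLw h0 hfix
  exact ⟨j, mem_Ioo.2 ⟨by omega, by omega⟩, hj⟩

end Dynamics

/-- `P_p(X_0(n,r) = 1, L < Δ, R < Δ | σ_0 = 0) ≤ 2Δ·(4pq)^r` where `q = 1−p`.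
The conditional probability is written as `P_p(event ∩ condition)/P_p(condition)`. -/
theorem close_walls (p : ℝ) (hp : 0 < p) (hp2 : p < 1 / 2) (r Δ n : ℕ)
    (hn : 2 * r + 1 < n) :
    haveI : NeZero n := ⟨by omega⟩
    pr p {σ : ZMod n → Bool |
        ringFix n r σ 0 = true ∧ Lwall n r σ < Δ ∧ Rwall n r σ < Δ ∧ σ 0 = false} /
      pr p {σ : ZMod n → Bool | σ 0 = false}
      ≤ 2 * Δ * (4 * p * (1 - p)) ^ r := by
  have : NeZero n := ⟨by omega⟩
  have hq : 0 < 1 - p := by linarith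
  rw [pr_apply_eq_false, div_le_iff₀ hq]
  calc _ ≤ ∑ j ∈ Ioo (-(Δ : ℤ)) Δ,
          pr p {σ : ZMod n → Bool | σ 0 = false ∧ r + 1 ≤ activeNbrs n r σ j} := by
        refine pr_le_sum_of_subset_biUnion hp.le (by linarith) _ _
          fun σ ⟨hfix, hL, hR, h0⟩ => ?_
        obtain ⟨j, hj, hmaj⟩ := exists_activeNbrs_ge_of_walls_lt h0 hfix hL hR
        exact Set.mem_iUnion₂.2 ⟨j, hj, h0, hmaj⟩
    _ ≤ ∑ _j ∈ Ioo (-(Δ : ℤ)) Δ, (1 - p) * (4 * p * (1 - p)) ^ r :=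
        sum_le_sum fun j _ => pr_apply_zero_eq_false_and_activeNbrs_ge hp hp2 hn _
    _ ≤ (2 * Δ : ℕ) * ((1 - p) * (4 * p * (1 - p)) ^ r) := by
        rw [sum_const, nsmul_eq_mul, Int.card_Ioo]
        gcongr
        omega
    _ = 2 * Δ * (4 * p * (1 - p)) ^ r * (1 - p) := by push_cast; ring
end
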